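/- Let 1 < q ≤ ∞ and s ≤ n/q′ with ε > 0 chosen so that 1 − 1/q − ε > 0. Define for integers N ≥ 1 the sequences on ℤⁿ: a_k = ⟨k⟩^{−n/q − s}(C + log⟨k⟩)^{−1/q − ε} for |k| ≤ N (and 0 otherwise), and b_k = 1 for N ≤ |k| ≤ 5N (and 0 otherwise). Then ‖a‖_{ℓ^q_s} ≤ C₁ (uniformly in N), ‖b‖_{ℓ^q_s} ∼ N^{s + n/q}, while for every k with 2N ≤ |k| ≤ 4N the convolution satisfies (a∗b)_k ≥ c (1 + log(1 + N/2))^{1 − 1/q − ε}, so that ‖a∗b‖_{ℓ^q_s} ≥ c′ N^{s+n/q}(1 + log(1+N/2))^{1−1/q−ε}; hence no bound ‖a∗b‖_{ℓ^q_s} ≲ ‖a‖_{ℓ^q_s}‖b‖_{ℓ^q_s} can hold uniformly in N. -/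

import Mathlib

open MeasureTheory
open scoped ENNReal NNReal

noncomputable section

/-- The Japanese bracket `⟨k⟩ = (1+|k|²)^{1/2}` on `ℤⁿ`. -/
def jbZ {n : ℕ} (k : Fin n → ℤ) : ℝ := (1 + ∑ i, ((k i : ℝ)) ^ 2) ^ ((1:ℝ)/2)

/-- The Euclidean length `|k|` of `k ∈ ℤⁿ`. -/
def normZ {n : ℕ} (k : Fin n → ℤ) : ℝ := Real.sqrt (∑ i, ((k i : ℝ)) ^ 2)

/-- The weighted norm `‖a‖_{ℓ^q_s}` of a real sequence on `ℤⁿ`. -/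
def lqsNormR {n : ℕ} (q : ℝ≥0∞) (s : ℝ) (a : (Fin n → ℤ) → ℝ) : ℝ≥0∞ :=
  eLpNorm (fun k => jbZ k ^ s * |a k|) q Measure.count

/-- The test sequence `a_k = ⟨k⟩^{−n/q−s} (C₀ + log⟨k⟩)^{−1/q−ε}` for `|k| ≤ N`,
`0` otherwise. -/
def seqA {n : ℕ} (q : ℝ≥0∞) (s C₀ ε : ℝ) (N : ℕ) (k : Fin n → ℤ) : ℝ :=
  if normZ k ≤ N then
    jbZ k ^ (-((n : ℝ) / q.toReal) - s) * (C₀ + Real.log (jbZ k)) ^ (-(1 / q.toReal) - ε)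
  else 0

/-- The test sequence `b_k = 1` for `N ≤ |k| ≤ 5N`, `0` otherwise. -/
def seqB {n : ℕ} (N : ℕ) (k : Fin n → ℤ) : ℝ :=
  if (N : ℝ) ≤ normZ k ∧ normZ k ≤ 5 * N then 1 else 0

/-!
Since `⟨k⟩^s a_k = ⟨k⟩^{-n/q} (C₀ + log⟨k⟩)^{-1/q-ε}`, the `q`-th power of `‖a‖_{ℓ^q_s}` is the
borderline lattice sum `∑ ⟨k⟩^{-n} (C₀ + log⟨k⟩)^{-1-εq}`, which converges: the dyadic shell
`2^j ≤ ⟨k⟩ < 2^{j+1}` contributes `O(j^{-1-εq})`. The sequence `b` is the indicator of an annulus of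
radius `≈ N`, on which `⟨k⟩^s ≈ N^s`, so `‖b‖_{ℓ^q_s} ≈ N^{s+n/q}`. For `2N ≤ |k| ≤ 4N` every
`k - ℓ` with `|ℓ| ≤ N` lies in that annulus, so `(a∗b)_k = ∑_{|ℓ|≤N} a_ℓ`; because `s ≤ n/q′` this
dominates `∑_{|ℓ|≤N} ⟨ℓ⟩^{-n} (C₀ + log⟨ℓ⟩)^{-1/q-ε} ≳ (log N)^{1-1/q-ε}`, a harmonic sum in
disguise. Hence `‖a∗b‖ / (‖a‖ ‖b‖) ≳ (log N)^{1-1/q-ε} → ∞`.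

For `q = ∞` we have `q.toReal = 0` and `1 / 0 = 0` in Lean, so the exponents `n/q` and `1/q`
vanish and the same bounds cover that case.
-/

open Finset Filter

section

variable {n : ℕ}

lemma normZ_nonneg (k : Fin n → ℤ) : 0 ≤ normZ k := Real.sqrt_nonneg _

lemma normZ_sq (k : Fin n → ℤ) : normZ k ^ 2 = ∑ i, (k i : ℝ) ^ 2 :=
  Real.sq_sqrt (by positivity)

lemma jbZ_eq_sqrt (k : Fin n → ℤ) : jbZ k = √(1 + normZ k ^ 2) := by
  rw [jbZ, normZ_sq, Real.sqrt_eq_rpow]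

lemma one_le_jbZ (k : Fin n → ℤ) : 1 ≤ jbZ k := by
  rw [jbZ_eq_sqrt, Real.one_le_sqrt]
  nlinarith [normZ_nonneg k]

lemma jbZ_pos (k : Fin n → ℤ) : 0 < jbZ k := one_pos.trans_le (one_le_jbZ k)

lemma normZ_le_jbZ (k : Fin n → ℤ) : normZ k ≤ jbZ k := by
  rw [jbZ_eq_sqrt, Real.le_sqrt (normZ_nonneg k) (by positivity)]
  linarith

lemma jbZ_le_one_add_normZ (k : Fin n → ℤ) : jbZ k ≤ 1 + normZ k := by
  rw [jbZ_eq_sqrt, Real.sqrt_le_left (by linarith [normZ_nonneg k])]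
  nlinarith [normZ_nonneg k]

lemma jbZ_zero : jbZ (0 : Fin n → ℤ) = 1 := by simp [jbZ]

lemma jbZ_le_of_normZ_sq_le {k : Fin n → ℤ} {R : ℝ} (hR : 0 ≤ R) (h : 1 + normZ k ^ 2 ≤ R ^ 2) :
    jbZ k ≤ R := by
  rw [jbZ_eq_sqrt]
  exact Real.sqrt_le_iff.mpr ⟨hR, h⟩

lemma abs_apply_le_normZ (k : Fin n → ℤ) (i : Fin n) : |(k i : ℝ)| ≤ normZ k := by
  rw [normZ, ← Real.sqrt_sq_eq_abs]
  exact Real.sqrt_le_sqrt (single_le_sum (fun j _ => sq_nonneg (k j : ℝ)) (mem_univ i))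

lemma normZ_eq_norm (k : Fin n → ℤ) :
    normZ k = ‖(WithLp.toLp 2 (fun i => (k i : ℝ)) : EuclideanSpace ℝ (Fin n))‖ := by
  simp [normZ, EuclideanSpace.norm_eq]

lemma normZ_sub_le (k l : Fin n → ℤ) : normZ (k - l) ≤ normZ k + normZ l := by
  have := norm_sub_le (WithLp.toLp 2 (fun i => (k i : ℝ)) : EuclideanSpace ℝ (Fin n))
    (WithLp.toLp 2 (fun i => (l i : ℝ)))
  simpa [normZ_eq_norm, ← WithLp.toLp_sub, Pi.sub_def] using this

lemma normZ_sub_normZ_le (k l : Fin n → ℤ) : normZ k - normZ l ≤ normZ (k - l) := by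
  have := norm_sub_norm_le (WithLp.toLp 2 (fun i => (k i : ℝ)) : EuclideanSpace ℝ (Fin n))
    (WithLp.toLp 2 (fun i => (l i : ℝ)))
  simpa [normZ_eq_norm, ← WithLp.toLp_sub, Pi.sub_def] using this

def latticeBall (n R : ℕ) : Finset (Fin n → ℤ) :=
  (Fintype.piFinset fun _ => Icc (-(R : ℤ)) R).filter fun k => normZ k ≤ R

lemma mem_latticeBall {k : Fin n → ℤ} {R : ℕ} : k ∈ latticeBall n R ↔ normZ k ≤ R := by
  refine mem_filter.trans (and_iff_right_of_imp fun h => ?_)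
  refine Fintype.mem_piFinset.mpr fun i => mem_Icc.mpr (abs_le.mp ?_)
  exact_mod_cast (abs_apply_le_normZ k i).trans h

lemma card_latticeBall_le (n R : ℕ) : #(latticeBall n R) ≤ (2 * R + 1) ^ n := by
  refine (card_filter_le _ _).trans_eq ?_
  simp [Int.card_Icc, show ((R : ℤ) + 1 + R).toNat = 2 * R + 1 by omega]

def slab (i₀ : Fin n) (a b M : ℕ) : Finset (Fin n → ℤ) :=
  Fintype.piFinset fun i => if i = i₀ then Icc (a : ℤ) b else Icc 0 (M : ℤ)

lemma card_slab (i₀ : Fin n) (a b M : ℕ) : #(slab i₀ a b M) = (b + 1 - a) * (M + 1) ^ (n - 1) := by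
  simp [slab, apply_ite, prod_ite, Int.card_Icc, filter_eq', filter_ne']

lemma normZ_bounds_of_mem_slab {i₀ : Fin n} {a b M : ℕ} {k : Fin n → ℤ} (hk : k ∈ slab i₀ a b M) :
    a ≤ normZ k ∧ normZ k ^ 2 ≤ b ^ 2 + n * M ^ 2 := by
  have hk' := Fintype.mem_piFinset.mp hk
  have hki (i : Fin n) : (k i : ℝ) ^ 2 ≤ (if i = i₀ then (b : ℝ) ^ 2 else 0) + M ^ 2 := by
    have := hk' i
    split_ifs at this ⊢ with hi
    · have ⟨h1, h2⟩ := mem_Icc.mp this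
      have : (a : ℝ) ≤ k i := by exact_mod_cast h1
      have : (k i : ℝ) ≤ b := by exact_mod_cast h2
      nlinarith [(Nat.cast_nonneg a : (0:ℝ) ≤ a)]
    · have ⟨h1, h2⟩ := mem_Icc.mp this
      have : (0 : ℝ) ≤ k i := by exact_mod_cast h1
      have : (k i : ℝ) ≤ M := by exact_mod_cast h2
      nlinarith
  constructor
  · have h := mem_Icc.mp (by simpa using hk' i₀)
    calc (a : ℝ) ≤ k i₀ := by exact_mod_cast h.1
      _ ≤ |(k i₀ : ℝ)| := le_abs_self _
      _ ≤ normZ k := abs_apply_le_normZ k i₀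
  · rw [normZ_sq]
    refine (sum_le_sum fun i _ => hki i).trans_eq ?_
    simp [sum_add_distrib]

lemma rpow_jbZ_mul_abs_nonneg (s : ℝ) (f : (Fin n → ℤ) → ℝ) (k : Fin n → ℤ) :
    0 ≤ jbZ k ^ s * |f k| :=
  mul_nonneg (Real.rpow_nonneg (jbZ_pos k).le s) (abs_nonneg _)

lemma pow_rpow_one_div {x : ℝ} (hx : 0 ≤ x) (n : ℕ) (p : ℝ) :
    (x ^ n) ^ (1 / p) = x ^ ((n : ℝ) / p) := by
  rw [← Real.rpow_natCast, ← Real.rpow_mul hx, mul_one_div]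

section WeightedNorm

variable {q : ℝ≥0∞} {s : ℝ} {f : (Fin n → ℤ) → ℝ}

lemma enorm_mul_count_rpow {S : Finset (Fin n → ℤ)} {M : ℝ} (hM : 0 ≤ M) {p : ℝ}
    (hp : 0 ≤ p) :
    ‖M‖ₑ * Measure.count (S : Set (Fin n → ℤ)) ^ (1 / p) =
      ENNReal.ofReal (M * (#S : ℝ) ^ (1 / p)) := by
  rw [Real.enorm_of_nonneg hM, Measure.count_apply_finset, ← ENNReal.ofReal_natCast,
    ENNReal.ofReal_rpow_of_nonneg (Nat.cast_nonneg _) (by positivity), ENNReal.ofReal_mul hM]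

lemma lqsNormR_le_of_support_subset {S : Finset (Fin n → ℤ)} {M : ℝ} (hM : 0 ≤ M)
    (hS : ∀ k ∉ S, f k = 0) (hf : ∀ k ∈ S, jbZ k ^ s * |f k| ≤ M) :
    lqsNormR q s f ≤ ENNReal.ofReal (M * (#S : ℝ) ^ (1 / q.toReal)) := by
  calc lqsNormR q s f ≤ eLpNorm ((S : Set (Fin n → ℤ)).indicator fun _ => M) q Measure.count := by
        refine eLpNorm_mono_real fun k => ?_
        rw [Real.norm_of_nonneg (rpow_jbZ_mul_abs_nonneg s f k)]
        by_cases hk : k ∈ S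
        · simpa [hk] using hf k hk
        · simp [hk, hS k hk]
    _ ≤ _ := eLpNorm_indicator_const_le _ _
    _ = _ := enorm_mul_count_rpow hM ENNReal.toReal_nonneg

lemma le_lqsNormR_of_le_on {S : Finset (Fin n → ℤ)} {L : ℝ} (hq : q ≠ 0) (hS : S.Nonempty)
    (hL : 0 ≤ L) (hf : ∀ k ∈ S, L ≤ jbZ k ^ s * |f k|) :
    ENNReal.ofReal (L * (#S : ℝ) ^ (1 / q.toReal)) ≤ lqsNormR q s f := by
  calc ENNReal.ofReal (L * (#S : ℝ) ^ (1 / q.toReal))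
      = eLpNorm ((S : Set (Fin n → ℤ)).indicator fun _ => L) q Measure.count := by
        rw [eLpNorm_indicator_const' S.measurableSet (by simpa using hS.ne_empty) hq,
          enorm_mul_count_rpow hL ENNReal.toReal_nonneg]
    _ ≤ lqsNormR q s f := by
        refine eLpNorm_mono_real fun k => ?_
        by_cases hk : k ∈ S
        · simpa [hk, abs_of_nonneg hL] using hf k hk
        · simpa [hk] using rpow_jbZ_mul_abs_nonneg s f k

lemma lqsNormR_top_le {M : ℝ} (hf : ∀ k, jbZ k ^ s * |f k| ≤ M) :
    lqsNormR ∞ s f ≤ ENNReal.ofReal M := by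
  rw [lqsNormR, eLpNorm_exponent_top]
  refine eLpNormEssSup_le_of_ae_bound (Eventually.of_forall fun k => ?_)
  rw [Real.norm_of_nonneg (rpow_jbZ_mul_abs_nonneg s f k)]
  exact hf k

lemma lqsNormR_le_of_summable (hq₀ : q ≠ 0) (hq : q ≠ ∞) {G : (Fin n → ℤ) → ℝ}
    (hG : Summable G) (hf : ∀ k, (jbZ k ^ s * |f k|) ^ q.toReal ≤ G k) :
    lqsNormR q s f ≤ ENNReal.ofReal ((∑' k, G k) ^ (1 / q.toReal)) := by
  have hG₀ (k : Fin n → ℤ) : 0 ≤ G k :=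
    (Real.rpow_nonneg (rpow_jbZ_mul_abs_nonneg s f k) _).trans (hf k)
  rw [lqsNormR, eLpNorm_eq_lintegral_rpow_enorm_toReal hq₀ hq, lintegral_count,
    ← ENNReal.ofReal_rpow_of_nonneg (tsum_nonneg hG₀) (by positivity),
    ENNReal.ofReal_tsum_of_nonneg hG₀ hG]
  gcongr with k
  rw [Real.enorm_of_nonneg (rpow_jbZ_mul_abs_nonneg s f k),
    ENNReal.ofReal_rpow_of_nonneg (rpow_jbZ_mul_abs_nonneg s f k) ENNReal.toReal_nonneg]
  exact ENNReal.ofReal_le_ofReal (hf k)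

end WeightedNorm

lemma rpow_bounds_of_le_of_le_mul {x y c : ℝ} (hy : 0 < y) (h₁ : y ≤ x) (h₂ : x ≤ c * y)
    (s : ℝ) : c ^ (-|s|) * y ^ s ≤ x ^ s ∧ x ^ s ≤ c ^ |s| * y ^ s := by
  have ht : 1 ≤ x / y := (one_le_div hy).mpr h₁
  have htc : x / y ≤ c := (div_le_iff₀ hy).mpr h₂
  have hx : x ^ s = (x / y) ^ s * y ^ s := by
    rw [← Real.mul_rpow (by positivity) hy.le, div_mul_cancel₀ x hy.ne']
  have hys := Real.rpow_pos_of_pos hy s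
  rw [hx]
  constructor
  · gcongr
    calc c ^ (-|s|) ≤ (x / y) ^ (-|s|) :=
          Real.rpow_le_rpow_of_nonpos (by positivity) htc (by simp)
      _ ≤ (x / y) ^ s := Real.rpow_le_rpow_of_exponent_le ht (neg_abs_le s)
  · gcongr
    calc (x / y) ^ s ≤ (x / y) ^ |s| := Real.rpow_le_rpow_of_exponent_le ht (le_abs_self s)
      _ ≤ c ^ |s| := Real.rpow_le_rpow (by positivity) htc (abs_nonneg s)

lemma rpow_jbZ_bounds {N : ℕ} (hN : 1 ≤ N) {k : Fin n → ℤ} (h₁ : N ≤ normZ k)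
    (h₂ : normZ k ≤ 5 * N) (s : ℝ) :
    6 ^ (-|s|) * (N : ℝ) ^ s ≤ jbZ k ^ s ∧ jbZ k ^ s ≤ 6 ^ |s| * (N : ℝ) ^ s := by
  have hN' : (1 : ℝ) ≤ N := by exact_mod_cast hN
  refine rpow_bounds_of_le_of_le_mul (by positivity) (h₁.trans (normZ_le_jbZ k)) ?_ s
  linarith [jbZ_le_one_add_normZ k]

lemma div_le_natDiv_add_one (a b : ℕ) : (a : ℝ) / b ≤ (a / b : ℕ) + 1 := by
  rw [← Nat.floor_div_eq_div (K := ℝ)]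
  exact (Nat.lt_floor_add_one _).le

lemma mul_natDiv_sq_le {a b : ℕ} (hb : 0 < b) : (b : ℝ) * ((a / b : ℕ) : ℝ) ^ 2 ≤ (a : ℝ) ^ 2 := by
  have h₁ : ((a / b : ℕ) : ℝ) * b ≤ a := by exact_mod_cast Nat.div_mul_le_self a b
  have h₂ : ((a / b : ℕ) : ℝ) ≤ (a / b : ℕ) * b :=
    le_mul_of_one_le_right (by positivity) (by exact_mod_cast hb)
  nlinarith [(by positivity : (0 : ℝ) ≤ (a / b : ℕ))]

def annulusSlab (i₀ : Fin n) (N : ℕ) : Finset (Fin n → ℤ) := slab i₀ (2 * N) (3 * N) (N / n)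

lemma normZ_bounds_of_mem_annulusSlab {i₀ : Fin n} {N : ℕ} {k : Fin n → ℤ}
    (hk : k ∈ annulusSlab i₀ N) : 2 * N ≤ normZ k ∧ normZ k ≤ 4 * N := by
  obtain ⟨h₁, h₂⟩ := normZ_bounds_of_mem_slab hk
  have := mul_natDiv_sq_le (a := N) i₀.pos
  push_cast at h₁ h₂
  exact ⟨h₁, by nlinarith [normZ_nonneg k, (by positivity : (0 : ℝ) ≤ N)]⟩

lemma pow_le_card_annulusSlab (i₀ : Fin n) (N : ℕ) :
    ((N : ℝ) / n) ^ n ≤ (annulusSlab i₀ N).card := by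
  obtain ⟨d, rfl⟩ := Nat.exists_eq_add_one.mpr i₀.pos
  rw [annulusSlab, card_slab, show 3 * N + 1 - 2 * N = N + 1 by omega, add_tsub_cancel_right,
    pow_succ']
  push_cast
  gcongr
  · exact (div_le_self (by positivity) (by simp)).trans (by linarith)
  · exact_mod_cast div_le_natDiv_add_one N (d + 1)

lemma inv_mul_le_sum_slab (i₀ : Fin n) {m : ℕ} (hm : 1 ≤ m) :
    ((2 : ℝ) ^ n * (n : ℝ) ^ (n - 1) * m)⁻¹ ≤ ∑ k ∈ slab i₀ m m (m / n), (jbZ k ^ n)⁻¹ := by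
  have hm' : (1 : ℝ) ≤ m := by exact_mod_cast hm
  have hjb : ∀ k ∈ slab i₀ m m (m / n), ((2 * m : ℝ) ^ n)⁻¹ ≤ (jbZ k ^ n)⁻¹ := by
    intro k hk
    obtain ⟨-, h⟩ := normZ_bounds_of_mem_slab hk
    have := mul_natDiv_sq_le (a := m) i₀.pos
    have : jbZ k ≤ 2 * m := jbZ_le_of_normZ_sq_le (by positivity) (by nlinarith)
    gcongr
    · exact pow_pos (jbZ_pos k) n
    · exact (jbZ_pos k).le
  refine le_trans ?_ (card_nsmul_le_sum _ _ _ hjb)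
  obtain ⟨d, rfl⟩ := Nat.exists_eq_add_one.mpr i₀.pos
  rw [card_slab, nsmul_eq_mul, add_tsub_cancel_left, one_mul, add_tsub_cancel_right]
  calc ((2 : ℝ) ^ (d + 1) * ((d + 1 : ℕ) : ℝ) ^ d * m)⁻¹
      = ((m : ℝ) / (d + 1 : ℕ)) ^ d * ((2 * m : ℝ) ^ (d + 1))⁻¹ := by
        push_cast
        rw [div_pow]
        field_simp
        ring
    _ ≤ _ := by
        push_cast
        gcongr
        exact_mod_cast div_le_natDiv_add_one m (d + 1)

lemma log_one_add_div_two_le (N : ℕ) : Real.log (1 + N / 2) ≤ 1 + Real.log (N / 2 + 1 : ℕ) := by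
  have h : (1 + N / 2 : ℝ) ≤ 2 * ((N / 2 + 1 : ℕ) : ℝ) := by
    have : (N : ℝ) ≤ 2 * (N / 2 : ℕ) + 1 := by exact_mod_cast (by omega : N ≤ 2 * (N / 2) + 1)
    push_cast
    linarith
  calc Real.log (1 + N / 2) ≤ Real.log (2 * ((N / 2 + 1 : ℕ) : ℝ)) :=
        Real.log_le_log (by positivity) h
    _ = Real.log 2 + Real.log (N / 2 + 1 : ℕ) := Real.log_mul (by norm_num) (by positivity)
    _ ≤ _ := by linarith [Real.log_two_lt_d9]

/-- The slabs `slab i₀ m m (m / n)`, `m ≤ N / 2`, are disjoint subsets of the ball; the `m`-th one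
contributes `≳ 1 / m` and the zeroth one is `{0}`. -/
lemma one_add_harmonic_div_le_sum_latticeBall (i₀ : Fin n) (N : ℕ) :
    1 + (harmonic (N / 2) : ℝ) / (2 ^ n * (n : ℝ) ^ (n - 1)) ≤
      ∑ k ∈ latticeBall n N, (jbZ k ^ n)⁻¹ := by
  set T : ℕ → Finset (Fin n → ℤ) := fun m => slab i₀ m m (m / n)
  have hT : ∀ m ∈ range (N / 2 + 1), T m ⊆ latticeBall n N := by
    intro m hm k hk
    have : (2 * m : ℝ) ≤ N := by have := mem_range.mp hm; norm_cast; omega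
    obtain ⟨-, h⟩ := normZ_bounds_of_mem_slab hk
    have := mul_natDiv_sq_le (a := m) i₀.pos
    exact mem_latticeBall.mpr (by nlinarith [normZ_nonneg k])
  have hdisj : (range (N / 2 + 1) : Set ℕ).PairwiseDisjoint T := by
    intro m _ m' _ hne
    refine disjoint_left.mpr fun k hk hk' => hne ?_
    have h := Fintype.mem_piFinset.mp hk i₀
    have h' := Fintype.mem_piFinset.mp hk' i₀
    simp only [if_pos, mem_Icc] at h h'
    omega
  have hT₀ : 1 ≤ ∑ k ∈ T 0, (jbZ k ^ n)⁻¹ := by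
    have h₀ : (0 : Fin n → ℤ) ∈ T 0 := Fintype.mem_piFinset.mpr fun i => by split_ifs <;> simp
    calc (1 : ℝ) = (jbZ (0 : Fin n → ℤ) ^ n)⁻¹ := by simp [jbZ_zero]
      _ ≤ _ := single_le_sum (f := fun k => (jbZ k ^ n)⁻¹)
          (fun k _ => by have := jbZ_pos k; positivity) h₀
  calc 1 + (harmonic (N / 2) : ℝ) / (2 ^ n * (n : ℝ) ^ (n - 1))
      ≤ ∑ m ∈ range (N / 2 + 1), ∑ k ∈ T m, (jbZ k ^ n)⁻¹ := by
        rw [sum_range_succ', add_comm, harmonic, Rat.cast_sum, sum_div]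
        gcongr with m
        have := inv_mul_le_sum_slab i₀ (Nat.le_add_left 1 m)
        push_cast at this ⊢
        rwa [div_eq_inv_mul, ← mul_inv]
    _ = ∑ k ∈ (range (N / 2 + 1)).biUnion T, (jbZ k ^ n)⁻¹ := (sum_biUnion hdisj).symm
    _ ≤ _ := sum_le_sum_of_subset_of_nonneg (biUnion_subset.mpr hT)
        fun k _ _ => by have := jbZ_pos k; positivity

lemma one_add_log_div_le_sum_latticeBall (i₀ : Fin n) (N : ℕ) :
    (1 + Real.log (1 + N / 2)) / (2 ^ n * (n : ℝ) ^ (n - 1)) ≤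
      ∑ k ∈ latticeBall n N, (jbZ k ^ n)⁻¹ := by
  set d : ℝ := 2 ^ n * (n : ℝ) ^ (n - 1)
  have hd : 2 ≤ d := by
    have : (1 : ℝ) ≤ (n : ℝ) ^ (n - 1) := one_le_pow₀ (by exact_mod_cast i₀.pos)
    have : (2 : ℝ) ≤ 2 ^ n := le_self_pow₀ (by norm_num) i₀.pos.ne'
    nlinarith
  refine le_trans ?_ (one_add_harmonic_div_le_sum_latticeBall i₀ N)
  calc (1 + Real.log (1 + N / 2)) / d ≤ 2 / d + Real.log (N / 2 + 1 : ℕ) / d := by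
        rw [← add_div]
        exact div_le_div_of_nonneg_right (by linarith [log_one_add_div_two_le N]) (by positivity)
    _ ≤ 1 + (harmonic (N / 2) : ℝ) / d := by
        gcongr
        · exact (div_le_one (by positivity)).mpr hd
        · exact log_add_one_le_harmonic _

def dyadicIndex (k : Fin n → ℤ) : ℕ := Nat.log 2 ⌊jbZ k⌋₊

lemma two_pow_dyadicIndex_le (k : Fin n → ℤ) : (2 : ℝ) ^ dyadicIndex k ≤ jbZ k := by
  have h := Nat.pow_log_le_self 2 (Nat.floor_pos.mpr (one_le_jbZ k)).ne'
  calc (2 : ℝ) ^ dyadicIndex k = (2 ^ dyadicIndex k : ℕ) := by push_cast; rfl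
    _ ≤ ⌊jbZ k⌋₊ := by exact_mod_cast h
    _ ≤ jbZ k := Nat.floor_le (jbZ_pos k).le

lemma jbZ_lt_two_pow_dyadicIndex (k : Fin n → ℤ) : jbZ k < 2 ^ (dyadicIndex k + 1) := by
  have h : ⌊jbZ k⌋₊ + 1 ≤ 2 ^ (dyadicIndex k + 1) := Nat.lt_pow_succ_log_self (by norm_num) _
  calc jbZ k < ⌊jbZ k⌋₊ + 1 := Nat.lt_floor_add_one _
    _ ≤ (2 ^ (dyadicIndex k + 1) : ℕ) := by exact_mod_cast h
    _ = 2 ^ (dyadicIndex k + 1) := by push_cast; rfl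

def dyadicShell (n j : ℕ) : Finset (Fin n → ℤ) :=
  (latticeBall n (2 ^ (j + 1))).filter (dyadicIndex · = j)

lemma mem_dyadicShell {k : Fin n → ℤ} {j : ℕ} : k ∈ dyadicShell n j ↔ dyadicIndex k = j := by
  refine mem_filter.trans (and_iff_right_of_imp fun h => mem_latticeBall.mpr ?_)
  push_cast
  exact (normZ_le_jbZ k).trans (h ▸ jbZ_lt_two_pow_dyadicIndex k).le

lemma card_dyadicShell_le (n j : ℕ) : (#(dyadicShell n j) : ℝ) ≤ 8 ^ n * (2 ^ j) ^ n := by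
  rw [← mul_pow]
  refine (Nat.cast_le.mpr ((card_filter_le _ _).trans (card_latticeBall_le _ _))).trans ?_
  push_cast
  gcongr
  linarith [(one_le_pow₀ (by norm_num) : (1 : ℝ) ≤ 2 ^ j), pow_succ (2 : ℝ) j]

lemma inv_jbZ_pow_mul_rpow_log_le {C₀ δ : ℝ} (hC₀ : 1 ≤ C₀) (hδ : 0 < δ) (k : Fin n → ℤ) :
    (jbZ k ^ n)⁻¹ * (C₀ + Real.log (jbZ k)) ^ (-(1 + δ)) ≤
      ((2 ^ dyadicIndex k : ℝ) ^ n)⁻¹ * (((dyadicIndex k : ℝ) + 1) / 2) ^ (-(1 + δ)) := by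
  have h₂ := two_pow_dyadicIndex_le k
  have hlog : ((dyadicIndex k : ℝ) + 1) / 2 ≤ C₀ + Real.log (jbZ k) := by
    have := Real.log_le_log (by positivity) h₂
    rw [Real.log_pow] at this
    nlinarith [Real.log_two_gt_d9, (Nat.cast_nonneg _ : (0 : ℝ) ≤ dyadicIndex k)]
  refine mul_le_mul ?_ (Real.rpow_le_rpow_of_nonpos (by positivity) hlog (by linarith))
    (Real.rpow_nonneg (by linarith [Real.log_nonneg (one_le_jbZ k)]) _) (by positivity)
  gcongr

lemma sum_dyadicShell_le {C₀ δ : ℝ} (hC₀ : 1 ≤ C₀) (hδ : 0 < δ) (j : ℕ) :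
    ∑ k ∈ dyadicShell n j, (jbZ k ^ n)⁻¹ * (C₀ + Real.log (jbZ k)) ^ (-(1 + δ)) ≤
      8 ^ n * (((j : ℝ) + 1) / 2) ^ (-(1 + δ)) :=
  calc ∑ k ∈ dyadicShell n j, (jbZ k ^ n)⁻¹ * (C₀ + Real.log (jbZ k)) ^ (-(1 + δ))
      ≤ #(dyadicShell n j) • (((2 ^ j : ℝ) ^ n)⁻¹ * (((j : ℝ) + 1) / 2) ^ (-(1 + δ))) :=
        sum_le_card_nsmul _ _ _ fun k hk =>
          mem_dyadicShell.mp hk ▸ inv_jbZ_pow_mul_rpow_log_le hC₀ hδ k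
    _ ≤ 8 ^ n * (2 ^ j) ^ n * (((2 ^ j : ℝ) ^ n)⁻¹ * (((j : ℝ) + 1) / 2) ^ (-(1 + δ))) := by
        rw [nsmul_eq_mul]
        gcongr
        exact card_dyadicShell_le n j
    _ = 8 ^ n * (((j : ℝ) + 1) / 2) ^ (-(1 + δ)) := by field_simp

lemma summable_nat_add_one_div_two_rpow {r : ℝ} (hr : r < -1) :
    Summable fun j : ℕ => (((j : ℝ) + 1) / 2) ^ r := by
  have h := (summable_nat_add_iff 1).mpr (Real.summable_nat_rpow.mpr hr)
  refine (h.div_const (2 ^ r)).congr fun j => ?_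
  rw [Real.div_rpow (by positivity) (by norm_num)]
  push_cast
  rfl

lemma summable_inv_jbZ_pow_mul_rpow_log {C₀ δ : ℝ} (hC₀ : 1 ≤ C₀) (hδ : 0 < δ) :
    Summable fun k : Fin n → ℤ => (jbZ k ^ n)⁻¹ * (C₀ + Real.log (jbZ k)) ^ (-(1 + δ)) := by
  set F := fun k : Fin n → ℤ => (jbZ k ^ n)⁻¹ * (C₀ + Real.log (jbZ k)) ^ (-(1 + δ))
  set g := fun j : ℕ => 8 ^ n * (((j : ℝ) + 1) / 2) ^ (-(1 + δ))
  have hg : Summable g := (summable_nat_add_one_div_two_rpow (by linarith)).mul_left _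
  have hF₀ : 0 ≤ F := fun k => by
    have := jbZ_pos k
    have := Real.log_nonneg (one_le_jbZ k)
    positivity
  refine summable_of_sum_le hF₀ (c := ∑' j, g j) fun A => ?_
  calc ∑ k ∈ A, F k = ∑ j ∈ A.image dyadicIndex, ∑ k ∈ A.filter (dyadicIndex · = j), F k :=
        (sum_fiberwise_of_maps_to (fun k hk => mem_image_of_mem _ hk) F).symm
    _ ≤ ∑ j ∈ A.image dyadicIndex, g j := by
        refine sum_le_sum fun j _ => le_trans ?_ (sum_dyadicShell_le hC₀ hδ j)
        refine sum_le_sum_of_subset_of_nonneg (fun k hk => ?_) fun k _ _ => hF₀ k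
        exact mem_dyadicShell.mpr (mem_filter.mp hk).2
    _ ≤ ∑' j, g j := hg.sum_le_tsum _ fun j _ => by positivity

section Sequences

variable {q : ℝ≥0∞} {s C₀ ε : ℝ}

lemma seqA_nonneg (hC₀ : 1 ≤ C₀) (N : ℕ) (k : Fin n → ℤ) : 0 ≤ seqA q s C₀ ε N k := by
  have := Real.log_nonneg (one_le_jbZ k)
  unfold seqA
  split_ifs
  · exact mul_nonneg (Real.rpow_nonneg (jbZ_pos k).le _) (Real.rpow_nonneg (by linarith) _)
  · rfl

lemma rpow_jbZ_mul_abs_seqA_le (hC₀ : 1 ≤ C₀) (N : ℕ) (k : Fin n → ℤ) :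
    jbZ k ^ s * |seqA q s C₀ ε N k| ≤
      jbZ k ^ (-((n : ℝ) / q.toReal)) * (C₀ + Real.log (jbZ k)) ^ (-(1 / q.toReal) - ε) := by
  have hlog : 0 ≤ C₀ + Real.log (jbZ k) := by linarith [Real.log_nonneg (one_le_jbZ k)]
  rw [abs_of_nonneg (seqA_nonneg hC₀ N k), seqA]
  split_ifs
  · rw [← mul_assoc, ← Real.rpow_add (jbZ_pos k), add_sub_cancel]
  · rw [mul_zero]
    exact mul_nonneg (Real.rpow_nonneg (jbZ_pos k).le _) (Real.rpow_nonneg hlog _)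

lemma exists_lqsNormR_seqA_le (hq : q ≠ 0) (hC₀ : 1 ≤ C₀) (hε : 0 < ε) :
    ∃ C : ℝ, ∀ N : ℕ, lqsNormR q s (seqA (n := n) q s C₀ ε N) ≤ ENNReal.ofReal C := by
  have hlog (k : Fin n → ℤ) : 1 ≤ C₀ + Real.log (jbZ k) := by
    linarith [Real.log_nonneg (one_le_jbZ k)]
  rcases eq_or_ne q ∞ with rfl | hq_top
  · refine ⟨1, fun N => lqsNormR_top_le fun k => (rpow_jbZ_mul_abs_seqA_le hC₀ N k).trans ?_⟩
    simp only [ENNReal.toReal_top, div_zero, neg_zero, Real.rpow_zero, one_mul, zero_sub]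
    exact Real.rpow_le_one_of_one_le_of_nonpos (hlog k) (by linarith)
  set p := q.toReal
  have hp : 0 < p := ENNReal.toReal_pos hq hq_top
  have hG := summable_inv_jbZ_pow_mul_rpow_log (n := n) hC₀ (mul_pos hε hp)
  refine ⟨_, fun N => lqsNormR_le_of_summable hq hq_top hG fun k => ?_⟩
  calc (jbZ k ^ s * |seqA q s C₀ ε N k|) ^ p
      ≤ (jbZ k ^ (-((n : ℝ) / p)) * (C₀ + Real.log (jbZ k)) ^ (-(1 / p) - ε)) ^ p :=
        Real.rpow_le_rpow (rpow_jbZ_mul_abs_nonneg _ _ k) (rpow_jbZ_mul_abs_seqA_le hC₀ N k) hp.le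
    _ = (jbZ k ^ n)⁻¹ * (C₀ + Real.log (jbZ k)) ^ (-(1 + ε * p)) := by
        rw [Real.mul_rpow (Real.rpow_nonneg (jbZ_pos k).le _)
            (Real.rpow_nonneg (by linarith [hlog k]) _),
          ← Real.rpow_mul (jbZ_pos k).le, ← Real.rpow_mul (by linarith [hlog k]),
          show -((n : ℝ) / p) * p = -n by field_simp, Real.rpow_neg (jbZ_pos k).le,
          Real.rpow_natCast, show (-(1 / p) - ε) * p = -(1 + ε * p) by field_simp; ring]

lemma seqB_eq_one {N : ℕ} {k : Fin n → ℤ} (h₁ : N ≤ normZ k) (h₂ : normZ k ≤ 5 * N) :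
    seqB N k = 1 :=
  if_pos ⟨h₁, h₂⟩

lemma lqsNormR_seqB_le {N : ℕ} (hN : 1 ≤ N) :
    lqsNormR q s (seqB (n := n) N) ≤
      ENNReal.ofReal (6 ^ |s| * 11 ^ ((n : ℝ) / q.toReal) * (N : ℝ) ^ (s + n / q.toReal)) := by
  have hN' : (1 : ℝ) ≤ N := by exact_mod_cast hN
  have hsupp : ∀ k ∉ latticeBall n (5 * N), seqB (n := n) N k = 0 := by
    intro k hk
    refine if_neg fun h => hk (mem_latticeBall.mpr ?_)
    push_cast
    exact h.2
  refine (lqsNormR_le_of_support_subset (M := 6 ^ |s| * (N : ℝ) ^ s) (by positivity) hsupp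
    fun k _ => ?_).trans (ENNReal.ofReal_le_ofReal ?_)
  · unfold seqB
    split_ifs with h
    · simpa using (rpow_jbZ_bounds hN h.1 h.2 s).2
    · simp only [abs_zero, mul_zero]
      positivity
  · have hcard : ((latticeBall n (5 * N)).card : ℝ) ≤ (11 * N : ℝ) ^ n := by
      refine (Nat.cast_le.mpr (card_latticeBall_le n (5 * N))).trans ?_
      push_cast
      gcongr
      linarith
    calc 6 ^ |s| * (N : ℝ) ^ s * ((latticeBall n (5 * N)).card : ℝ) ^ (1 / q.toReal)
        ≤ 6 ^ |s| * (N : ℝ) ^ s * ((11 * N : ℝ) ^ n) ^ (1 / q.toReal) := by gcongr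
      _ = _ := by
        rw [pow_rpow_one_div (by positivity), Real.mul_rpow (by norm_num) (by positivity),
          Real.rpow_add (by positivity)]
        ring

end Sequences

lemma le_lqsNormR_of_le_on_annulusSlab {q : ℝ≥0∞} {s : ℝ} {f : (Fin n → ℤ) → ℝ}
    (hq : q ≠ 0) (i₀ : Fin n) {N : ℕ} (hN : 1 ≤ N) {L : ℝ} (hL : 0 ≤ L)
    (hf : ∀ k ∈ annulusSlab i₀ N, L ≤ |f k|) :
    ENNReal.ofReal (6 ^ (-|s|) / (n : ℝ) ^ ((n : ℝ) / q.toReal) * L *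
      (N : ℝ) ^ (s + n / q.toReal)) ≤ lqsNormR q s f := by
  have hN' : (1 : ℝ) ≤ N := by exact_mod_cast hN
  have hn : (0 : ℝ) < n := by exact_mod_cast i₀.pos
  have hcard := pow_le_card_annulusSlab i₀ N
  have hS : (annulusSlab i₀ N).Nonempty := by
    rw [← card_pos, ← Nat.cast_pos (α := ℝ)]
    exact hcard.trans_lt' (by positivity)
  refine le_trans (ENNReal.ofReal_le_ofReal ?_)
    (le_lqsNormR_of_le_on (L := 6 ^ (-|s|) * (N : ℝ) ^ s * L) hq hS (by positivity) fun k hk => ?_)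
  · calc 6 ^ (-|s|) / (n : ℝ) ^ ((n : ℝ) / q.toReal) * L * (N : ℝ) ^ (s + n / q.toReal)
        = 6 ^ (-|s|) * (N : ℝ) ^ s * L * (((N : ℝ) / n) ^ n) ^ (1 / q.toReal) := by
          rw [pow_rpow_one_div (by positivity), Real.div_rpow (by positivity) hn.le,
            Real.rpow_add (by positivity)]
          ring
      _ ≤ _ := by gcongr
  · obtain ⟨h₁, h₂⟩ := normZ_bounds_of_mem_annulusSlab hk
    exact mul_le_mul (rpow_jbZ_bounds hN (by linarith) (by linarith) s).1 (hf k hk) hL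
      (Real.rpow_nonneg (jbZ_pos k).le s)

lemma le_lqsNormR_seqB {q : ℝ≥0∞} (hq : q ≠ 0) (s : ℝ) (hn : 0 < n) {N : ℕ} (hN : 1 ≤ N) :
    ENNReal.ofReal (6 ^ (-|s|) / (n : ℝ) ^ ((n : ℝ) / q.toReal) * (N : ℝ) ^ (s + n / q.toReal)) ≤
      lqsNormR q s (seqB (n := n) N) := by
  simpa using le_lqsNormR_of_le_on_annulusSlab (s := s) (f := seqB N) hq ⟨0, hn⟩ hN zero_le_one
    fun k hk => by
      obtain ⟨h₁, h₂⟩ := normZ_bounds_of_mem_annulusSlab hk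
      rw [seqB_eq_one (by linarith) (by linarith), abs_one]

lemma log_jbZ_le_of_mem_latticeBall {N : ℕ} {k : Fin n → ℤ} (hk : k ∈ latticeBall n N) :
    Real.log (jbZ k) ≤ 1 + Real.log (1 + N / 2) := by
  have : jbZ k ≤ 2 * (1 + N / 2) := by linarith [jbZ_le_one_add_normZ k, mem_latticeBall.mp hk]
  calc Real.log (jbZ k) ≤ Real.log (2 * (1 + N / 2)) := Real.log_le_log (jbZ_pos k) this
    _ = Real.log 2 + Real.log (1 + N / 2) := Real.log_mul (by norm_num) (by positivity)
    _ ≤ _ := by linarith [Real.log_two_lt_d9]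

lemma one_le_one_add_log (N : ℕ) : 1 ≤ 1 + Real.log (1 + N / 2) := by
  have := Real.log_nonneg (le_add_of_nonneg_right (by positivity) : (1 : ℝ) ≤ 1 + N / 2)
  linarith

/-- On the ball, `C₀ + log⟨k⟩ ≤ 2 C₀ (1 + log (1 + N / 2))`, so the logarithmic factor can be
pulled out of the sum, leaving the harmonic lattice sum. -/
lemma inv_mul_rpow_le_sum_latticeBall_rpow_mul_rpow_log (i₀ : Fin n) {t θ C₀ : ℝ}
    (ht : -n ≤ t) (hθ₀ : 0 ≤ θ) (hθ₁ : θ ≤ 1) (hC₀ : 1 ≤ C₀) (N : ℕ) :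
    (2 * C₀ * (2 ^ n * (n : ℝ) ^ (n - 1)))⁻¹ * (1 + Real.log (1 + N / 2)) ^ (1 - θ) ≤
      ∑ k ∈ latticeBall n N, jbZ k ^ t * (C₀ + Real.log (jbZ k)) ^ (-θ) := by
  set X := 1 + Real.log (1 + N / 2)
  have hX : 1 ≤ X := one_le_one_add_log N
  have hterm : ∀ k ∈ latticeBall n N,
      (2 * C₀ * X) ^ (-θ) * (jbZ k ^ n)⁻¹ ≤ jbZ k ^ t * (C₀ + Real.log (jbZ k)) ^ (-θ) := by
    intro k hk
    have := log_jbZ_le_of_mem_latticeBall hk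
    have := Real.log_nonneg (one_le_jbZ k)
    rw [mul_comm, ← Real.rpow_natCast, ← Real.rpow_neg (jbZ_pos k).le]
    refine mul_le_mul (Real.rpow_le_rpow_of_exponent_le (one_le_jbZ k) ht)
      (Real.rpow_le_rpow_of_nonpos (by linarith) (by nlinarith) (by linarith))
      (by positivity) (Real.rpow_nonneg (jbZ_pos k).le _)
  have hconst : (2 * C₀) ^ (-1 : ℝ) * X ^ (1 - θ) ≤ (2 * C₀ * X) ^ (-θ) * X :=
    calc (2 * C₀) ^ (-1 : ℝ) * X ^ (1 - θ) ≤ (2 * C₀) ^ (-θ) * X ^ (1 - θ) := by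
          gcongr
          linarith
      _ = (2 * C₀ * X) ^ (-θ) * X := by
          rw [Real.mul_rpow (x := 2 * C₀) (by positivity) (by positivity), sub_eq_add_neg,
            Real.rpow_add (by positivity), Real.rpow_one]
          ring
  calc (2 * C₀ * (2 ^ n * (n : ℝ) ^ (n - 1)))⁻¹ * X ^ (1 - θ)
      = (2 * C₀) ^ (-1 : ℝ) * X ^ (1 - θ) / (2 ^ n * (n : ℝ) ^ (n - 1)) := by
        rw [Real.rpow_neg_one]; field_simp
    _ ≤ (2 * C₀ * X) ^ (-θ) * (X / (2 ^ n * (n : ℝ) ^ (n - 1))) := by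
        rw [← mul_div_assoc]; gcongr
    _ ≤ (2 * C₀ * X) ^ (-θ) * ∑ k ∈ latticeBall n N, (jbZ k ^ n)⁻¹ := by
        gcongr
        exact one_add_log_div_le_sum_latticeBall i₀ N
    _ ≤ _ := by
        rw [mul_sum]
        exact sum_le_sum hterm

def discreteConv (a b : (Fin n → ℤ) → ℝ) (k : Fin n → ℤ) : ℝ := ∑' ℓ, a ℓ * b (k - ℓ)

section Convolution

variable {q : ℝ≥0∞} {s C₀ ε : ℝ}

lemma discreteConv_seqA_seqB_eq_sum (N : ℕ) (k : Fin n → ℤ) :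
    discreteConv (seqA q s C₀ ε N) (seqB N) k =
      ∑ ℓ ∈ latticeBall n N, seqA q s C₀ ε N ℓ * seqB N (k - ℓ) :=
  tsum_eq_sum fun ℓ hℓ => by rw [seqA, if_neg (mt mem_latticeBall.mpr hℓ), zero_mul]

/-- For `|ℓ| ≤ N` the point `k - ℓ` lies in the annulus where `b = 1`, so `(a∗b)_k` is the whole
mass of `a`; and `s ≤ n/q′` makes the weight `⟨ℓ⟩^{-n/q-s}` at least `⟨ℓ⟩^{-n}`. -/
lemma le_discreteConv_seqA_seqB (hn : 0 < n) (hs : s ≤ n * (1 - 1 / q.toReal)) (hε : 0 < ε)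
    (hε' : 0 < 1 - 1 / q.toReal - ε) (hC₀ : 1 ≤ C₀) (N : ℕ) {k : Fin n → ℤ}
    (h₁ : 2 * (N : ℝ) ≤ normZ k) (h₂ : normZ k ≤ 4 * N) :
    (2 * C₀ * (2 ^ n * (n : ℝ) ^ (n - 1)))⁻¹ *
        (1 + Real.log (1 + N / 2)) ^ (1 - 1 / q.toReal - ε) ≤
      discreteConv (seqA q s C₀ ε N) (seqB N) k := by
  have hinv : 0 ≤ 1 / q.toReal := by positivity
  have hnq : (n : ℝ) / q.toReal = n * (1 / q.toReal) := by ring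
  rw [discreteConv_seqA_seqB_eq_sum, sub_sub, ← neg_neg (1 / q.toReal + ε)]
  refine (inv_mul_rpow_le_sum_latticeBall_rpow_mul_rpow_log ⟨0, hn⟩
    (t := -(n / q.toReal) - s) (by linarith) (by linarith) (by linarith) hC₀ N).trans_eq
    (sum_congr rfl fun ℓ hℓ => ?_)
  have hℓ := mem_latticeBall.mp hℓ
  rw [seqB_eq_one (by linarith [normZ_sub_normZ_le k ℓ]) (by linarith [normZ_sub_le k ℓ]),
    mul_one, seqA, if_pos hℓ, neg_neg, neg_add']

lemma le_lqsNormR_discreteConv_seqA_seqB (hn : 0 < n) (hq : q ≠ 0)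
    (hs : s ≤ n * (1 - 1 / q.toReal)) (hε : 0 < ε) (hε' : 0 < 1 - 1 / q.toReal - ε)
    (hC₀ : 1 ≤ C₀) {N : ℕ} (hN : 1 ≤ N) :
    ENNReal.ofReal (6 ^ (-|s|) / (n : ℝ) ^ ((n : ℝ) / q.toReal) *
        (2 * C₀ * (2 ^ n * (n : ℝ) ^ (n - 1)))⁻¹ * (N : ℝ) ^ (s + n / q.toReal) *
        (1 + Real.log (1 + N / 2)) ^ (1 - 1 / q.toReal - ε)) ≤
      lqsNormR q s (discreteConv (seqA (n := n) q s C₀ ε N) (seqB N)) := by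
  have hC₀' : 0 < C₀ := by linarith
  have := Real.rpow_nonneg (zero_le_one.trans (one_le_one_add_log N)) (1 - 1 / q.toReal - ε)
  convert le_lqsNormR_of_le_on_annulusSlab hq ⟨0, hn⟩ hN (by positivity) fun k hk =>
    (le_discreteConv_seqA_seqB hn hs hε hε' hC₀ N (normZ_bounds_of_mem_annulusSlab hk).1
      (normZ_bounds_of_mem_annulusSlab hk).2).trans (le_abs_self _) using 2
  ring

end Convolution

lemma tendsto_one_add_log_rpow_atTop {τ : ℝ} (hτ : 0 < τ) :
    Tendsto (fun N : ℕ => (1 + Real.log (1 + N / 2)) ^ τ) atTop atTop :=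
  (tendsto_rpow_atTop hτ).comp <| tendsto_atTop_add_const_left _ 1 <|
    Real.tendsto_log_atTop.comp <| tendsto_atTop_add_const_left _ 1 <|
      tendsto_natCast_atTop_atTop.atTop_div_const two_pos

lemma not_exists_le_mul_of_tendsto_atTop {A B F : ℕ → ℝ≥0∞} {X Y : ℕ → ℝ} {C₁ c : ℝ}
    (hC₁ : 0 ≤ C₁) (hc : 0 < c) (hX : ∀ N, 1 ≤ N → 0 < X N) (hY : Tendsto Y atTop atTop)
    (hA : ∀ N, 1 ≤ N → A N ≤ ENNReal.ofReal C₁)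
    (hB : ∀ N, 1 ≤ N → B N ≤ ENNReal.ofReal (C₁ * X N))
    (hF : ∀ N, 1 ≤ N → ENNReal.ofReal (c * X N * Y N) ≤ F N) :
    ¬ ∃ C : ℝ≥0, 0 < C ∧ ∀ N : ℕ, 1 ≤ N → F N ≤ C * A N * B N := by
  rintro ⟨C, -, hC⟩
  obtain ⟨N, hYN, hN⟩ :=
    ((hY.eventually_gt_atTop (C * C₁ * C₁ / c)).and (eventually_ge_atTop 1)).exists
  have hXN := hX N hN
  have : c * X N * Y N ≤ C * C₁ * C₁ * X N := by
    refine (ENNReal.ofReal_le_ofReal_iff (by positivity)).mp ?_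
    calc ENNReal.ofReal (c * X N * Y N) ≤ C * A N * B N := (hF N hN).trans (hC N hN)
      _ ≤ C * ENNReal.ofReal C₁ * ENNReal.ofReal (C₁ * X N) := by gcongr; exacts [hA N hN, hB N hN]
      _ = ENNReal.ofReal (C * C₁ * C₁ * X N) := by
        rw [← ENNReal.ofReal_coe_nnreal, ← ENNReal.ofReal_mul (by positivity),
          ← ENNReal.ofReal_mul (by positivity), mul_assoc _ C₁ (X N)]
  rw [div_lt_iff₀ hc] at hYN
  nlinarith

end

/-- **counterexample for `s ≤ n/q′`.** Let `1 < q ≤ ∞`, `s ≤ n/q′`, `n ≥ 1`,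
`ε > 0` with `1 − 1/q − ε > 0`, and `C₀ ≥ 1`. Then: `‖a‖_{ℓ^q_s} ≤ C₁` uniformly in `N`;
`‖b‖_{ℓ^q_s} ∼ N^{s+n/q}`; for `2N ≤ |k| ≤ 4N` one has
`(a∗b)_k ≥ c (1 + log(1+N/2))^{1−1/q−ε}`; hence
`‖a∗b‖_{ℓ^q_s} ≥ c′ N^{s+n/q} (1+log(1+N/2))^{1−1/q−ε}`; consequently no bound
`‖a∗b‖_{ℓ^q_s} ≤ C‖a‖_{ℓ^q_s}‖b‖_{ℓ^q_s}` can hold uniformly in `N`. -/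
theorem counterexample_convolution_algebra (n : ℕ) (hn : 0 < n) (q : ℝ≥0∞) (hq : 1 < q)
    (s : ℝ) (hs : s ≤ (n : ℝ) * (1 - 1 / q.toReal))
    (ε : ℝ) (hε : 0 < ε) (hε' : 0 < 1 - 1 / q.toReal - ε)
    (C₀ : ℝ) (hC₀ : 1 ≤ C₀) :
    (∃ C₁ c c' : ℝ, 0 < C₁ ∧ 0 < c ∧ 0 < c' ∧ ∀ N : ℕ, 1 ≤ N →
      lqsNormR q s (seqA (n := n) q s C₀ ε N) ≤ ENNReal.ofReal C₁ ∧
      lqsNormR q s (seqB (n := n) N) ≤ ENNReal.ofReal (C₁ * (N : ℝ) ^ (s + (n : ℝ) / q.toReal)) ∧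
      ENNReal.ofReal (c * (N : ℝ) ^ (s + (n : ℝ) / q.toReal)) ≤ lqsNormR q s (seqB (n := n) N) ∧
      (∀ k : Fin n → ℤ, 2 * (N : ℝ) ≤ normZ k → normZ k ≤ 4 * N →
        c * (1 + Real.log (1 + (N : ℝ) / 2)) ^ (1 - 1 / q.toReal - ε) ≤
          ∑' ℓ, seqA (n := n) q s C₀ ε N ℓ * seqB (n := n) N (k - ℓ)) ∧
      ENNReal.ofReal (c' * (N : ℝ) ^ (s + (n : ℝ) / q.toReal) *
          (1 + Real.log (1 + (N : ℝ) / 2)) ^ (1 - 1 / q.toReal - ε)) ≤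
        lqsNormR q s (fun k => ∑' ℓ, seqA (n := n) q s C₀ ε N ℓ * seqB (n := n) N (k - ℓ))) ∧
    ¬ ∃ C : ℝ≥0, 0 < C ∧ ∀ N : ℕ, 1 ≤ N →
        lqsNormR q s (fun k => ∑' ℓ, seqA (n := n) q s C₀ ε N ℓ * seqB (n := n) N (k - ℓ)) ≤
          C * lqsNormR q s (seqA (n := n) q s C₀ ε N) * lqsNormR q s (seqB (n := n) N) := by
  have hq₀ : q ≠ 0 := (zero_lt_one.trans hq).ne'
  have hC₀' : 0 < C₀ := by linarith
  obtain ⟨Ka, hKa⟩ := exists_lqsNormR_seqA_le (n := n) (s := s) hq₀ hC₀ hε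
  set C₁ := max Ka (6 ^ |s| * 11 ^ ((n : ℝ) / q.toReal))
  set c_b : ℝ := 6 ^ (-|s|) / (n : ℝ) ^ ((n : ℝ) / q.toReal)
  set c_conv : ℝ := (2 * C₀ * (2 ^ n * (n : ℝ) ^ (n - 1)))⁻¹
  have hA (N : ℕ) (_ : 1 ≤ N) : lqsNormR q s (seqA (n := n) q s C₀ ε N) ≤ ENNReal.ofReal C₁ :=
    (hKa N).trans (ENNReal.ofReal_le_ofReal (le_max_left _ _))
  have hB (N : ℕ) (hN : 1 ≤ N) : lqsNormR q s (seqB (n := n) N) ≤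
      ENNReal.ofReal (C₁ * (N : ℝ) ^ (s + (n : ℝ) / q.toReal)) :=
    (lqsNormR_seqB_le hN).trans (by gcongr; exact le_max_right _ _)
  have hAB (N : ℕ) (hN : 1 ≤ N) :=
    le_lqsNormR_discreteConv_seqA_seqB hn hq₀ hs hε hε' hC₀ hN
  refine ⟨⟨C₁, min c_b c_conv, c_b * c_conv, by positivity, by positivity, by positivity,
      fun N hN => ⟨hA N hN, hB N hN, ?_, fun k h₁ h₂ => ?_, hAB N hN⟩⟩,
    not_exists_le_mul_of_tendsto_atTop (by positivity) (by positivity) (fun N hN => by positivity)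
      (tendsto_one_add_log_rpow_atTop hε') hA hB hAB⟩
  · exact (le_lqsNormR_seqB hq₀ s hn hN).trans' (by gcongr; exact min_le_left _ _)
  · refine (le_discreteConv_seqA_seqB hn hs hε hε' hC₀ N h₁ h₂).trans'
      (mul_le_mul_of_nonneg_right (min_le_right _ _) (Real.rpow_nonneg ?_ _))
    exact zero_le_one.trans (one_le_one_add_log N)
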